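/- arXiv:2307.06542 — 3 statements merged into one kernel-verified Lean document; each statement's English description precedes it below -/
import Mathlib

section
/- Let n be a positive integer, Q ∈ ℝ^{n×n} symmetric, σ ∈ (0,1), β_σ := log((1−σ)/σ), and x̃ ∈ {0,1}^n. Define the posterior P^{post}(x | x̃) := P_σ(x̃ | x) P_Q(x) / Σ_{x' ∈ {0,1}^n} P_σ(x̃ | x') P_Q(x'), where P_σ(x̃ | x) = ∏_i [σ(x̃_i − x_i)² + (1−σ)(1 − (x̃_i − x_i)²)] and P_Q is the Boltzmann distribution of Q. Then for every x ∈ {0,1}^n, P^{post}(x | x̃) = exp(−β_σ Σ_i (x̃_i − x_i)² − f_Q(x)) / Σ_{x'} exp(−β_σ Σ_i (x̃_i − x'_i)² − f_Q(x')), and this equals the Boltzmann distribution P_{Q̃^{β_σ,x̃}}(x) of the modified matrix Q̃^{β_σ,x̃}. -/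
/-! Each coordinate of the salt-and-pepper noise contributes `1 - σ` if the bit is kept and
`σ = (1 - σ) e^{-β_σ}` if it is flipped, so `P_σ(x̃ | x) = (1 - σ)^n e^{-β_σ d(x̃, x)}` with
`d(x̃, x) = Σᵢ (x̃ᵢ - xᵢ)²` the Hamming distance. The posterior is therefore proportional to
`e^{-β_σ d(x̃, x) - f_Q(x)}`. On binary vectors `xᵢ² = xᵢ`, so `d(x̃, x)` is an affine function
of `x` whose linear part `Σᵢ (1 - 2x̃ᵢ) xᵢ` is a diagonal quadratic form; adding `β_σ` times it
to `Q` gives `Q̃^{β_σ,x̃}` and leaves only a constant, which cancels on normalizing. -/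

noncomputable section

/-- Real-valued binary vector corresponding to a boolean vector. -/
def bvec {n : ℕ} (b : Fin n → Bool) : Fin n → ℝ := fun i => if b i then 1 else 0

/-- QUBO energy `f_Q(x) = Σ_{i,j} Q_{ij} x_i x_j`. -/
def quboEnergy {n : ℕ} (Q : Matrix (Fin n) (Fin n) ℝ) (x : Fin n → ℝ) : ℝ :=
  ∑ i, ∑ j, Q i j * x i * x j

/-- Boltzmann distribution on `{0,1}^n` with energy `f_Q`. -/
def boltzmann {n : ℕ} (Q : Matrix (Fin n) (Fin n) ℝ) (x : Fin n → Bool) : ℝ :=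
  Real.exp (-quboEnergy Q (bvec x)) /
    ∑ y : Fin n → Bool, Real.exp (-quboEnergy Q (bvec y))

/-- Salt-and-pepper noise transition probability `P_σ(x̃ | x)`. -/
def noiseProb {n : ℕ} (σ : ℝ) (xt x : Fin n → Bool) : ℝ :=
  ∏ i, (σ * (bvec xt i - bvec x i) ^ 2 + (1 - σ) * (1 - (bvec xt i - bvec x i) ^ 2))

/-- The modified QUBO matrix `Q̃^{ρ,x̃}`: off-diagonal entries of `Q`, and diagonal
entries `Q_{ii} + ρ(1 - 2x̃_i)`. -/
def modMatrix {n : ℕ} (Q : Matrix (Fin n) (Fin n) ℝ) (ρ : ℝ) (xt : Fin n → Bool) :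
    Matrix (Fin n) (Fin n) ℝ :=
  fun i j => if i = j then Q i i + ρ * (1 - 2 * bvec xt i) else Q i j

open Finset

theorem div_sum_eq_div_sum_of_forall_eq_mul {α K : Type*} [Fintype α] [Field K]
    {g h : α → K} {c : K} (hc : c ≠ 0) (hgh : ∀ y, g y = c * h y) (x : α) :
    g x / ∑ y, g y = h x / ∑ y, h y := by
  simp only [hgh, ← mul_sum, mul_div_mul_left _ _ hc]

theorem bvec_sq {n : ℕ} (b : Fin n → Bool) (i : Fin n) : bvec b i ^ 2 = bvec b i := by
  cases hb : b i <;> simp [bvec, hb]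

theorem bvec_sub_bvec_sq {n : ℕ} (a b : Fin n → Bool) (i : Fin n) :
    (bvec a i - bvec b i) ^ 2 = bvec a i + (1 - 2 * bvec a i) * bvec b i := by
  cases ha : a i <;> cases hb : b i <;> norm_num [bvec, ha, hb]

theorem noiseProb_factor_eq {σ : ℝ} (hσ : σ ∈ Set.Ioo (0 : ℝ) 1) {n : ℕ}
    (a b : Fin n → Bool) (i : Fin n) :
    σ * (bvec a i - bvec b i) ^ 2 + (1 - σ) * (1 - (bvec a i - bvec b i) ^ 2)
      = (1 - σ) * Real.exp (-Real.log ((1 - σ) / σ) * (bvec a i - bvec b i) ^ 2) := by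
  obtain ⟨hσ0, hσ1⟩ := hσ
  have hexp : Real.exp (-Real.log ((1 - σ) / σ)) = σ / (1 - σ) := by
    rw [Real.exp_neg, Real.exp_log (div_pos (by linarith) hσ0), inv_div]
  have hσ1' : 1 - σ ≠ 0 := by linarith
  cases ha : a i <;> cases hb : b i <;> simp [bvec, ha, hb, hexp] <;> field_simp

theorem noiseProb_eq {σ : ℝ} (hσ : σ ∈ Set.Ioo (0 : ℝ) 1) {n : ℕ} (a b : Fin n → Bool) :
    noiseProb σ a b
      = (1 - σ) ^ n * Real.exp (-Real.log ((1 - σ) / σ) * ∑ i, (bvec a i - bvec b i) ^ 2) := by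
  simp only [noiseProb, noiseProb_factor_eq hσ, prod_mul_distrib, prod_const, card_univ,
    Fintype.card_fin, ← Real.exp_sum, mul_sum]

theorem modMatrix_eq_add_diagonal {n : ℕ} (Q : Matrix (Fin n) (Fin n) ℝ) (ρ : ℝ)
    (xt : Fin n → Bool) :
    modMatrix Q ρ xt = Q + Matrix.diagonal fun i => ρ * (1 - 2 * bvec xt i) := by
  ext i j
  by_cases h : i = j
  · subst h; simp [modMatrix]
  · simp [modMatrix, h]

theorem quboEnergy_add_diagonal {n : ℕ} (Q : Matrix (Fin n) (Fin n) ℝ) (d x : Fin n → ℝ) :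
    quboEnergy (Q + Matrix.diagonal d) x = quboEnergy Q x + ∑ i, d i * x i ^ 2 := by
  simp only [quboEnergy, Matrix.add_apply, add_mul, sum_add_distrib, Matrix.diagonal_apply,
    ite_mul, zero_mul, sum_ite_eq, mem_univ, if_true, sq, mul_assoc]

theorem quboEnergy_modMatrix {n : ℕ} (Q : Matrix (Fin n) (Fin n) ℝ) (ρ : ℝ)
    (xt x : Fin n → Bool) :
    quboEnergy (modMatrix Q ρ xt) (bvec x)
      = quboEnergy Q (bvec x) + ρ * ∑ i, (bvec xt i - bvec x i) ^ 2 - ρ * ∑ i, bvec xt i := by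
  rw [modMatrix_eq_add_diagonal, quboEnergy_add_diagonal]
  simp only [bvec_sq, bvec_sub_bvec_sq, sum_add_distrib, mul_add, mul_sum]
  ring_nf

theorem stmt_3_general (n : ℕ) (Q : Matrix (Fin n) (Fin n) ℝ)
    (σ : ℝ) (hσ : σ ∈ Set.Ioo (0 : ℝ) 1)
    (β : ℝ) (hβ : β = Real.log ((1 - σ) / σ))
    (xt x : Fin n → Bool) :
    (noiseProb σ xt x * boltzmann Q x /
        ∑ x' : Fin n → Bool, noiseProb σ xt x' * boltzmann Q x'
      = Real.exp (-β * (∑ i, (bvec xt i - bvec x i) ^ 2) - quboEnergy Q (bvec x)) /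
        ∑ x' : Fin n → Bool,
          Real.exp (-β * (∑ i, (bvec xt i - bvec x' i) ^ 2) - quboEnergy Q (bvec x'))) ∧
    (noiseProb σ xt x * boltzmann Q x /
        ∑ x' : Fin n → Bool, noiseProb σ xt x' * boltzmann Q x'
      = boltzmann (modMatrix Q β xt) x) := by
  set Z := ∑ y : Fin n → Bool, Real.exp (-quboEnergy Q (bvec y))
  have hZ : 0 < Z := sum_pos (fun y _ => Real.exp_pos _) univ_nonempty
  have hc : (1 - σ) ^ n / Z ≠ 0 := (div_pos (pow_pos (by linarith [hσ.2]) n) hZ).ne'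
  have hpost : ∀ y, noiseProb σ xt y * boltzmann Q y
      = (1 - σ) ^ n / Z *
        Real.exp (-β * (∑ i, (bvec xt i - bvec y i) ^ 2) - quboEnergy Q (bvec y)) := by
    intro y
    rw [noiseProb_eq hσ, boltzmann, ← hβ, Real.exp_sub, Real.exp_neg]
    ring
  have hmod : ∀ y,
      Real.exp (-β * (∑ i, (bvec xt i - bvec y i) ^ 2) - quboEnergy Q (bvec y))
        = Real.exp (-(β * ∑ i, bvec xt i)) *
          Real.exp (-quboEnergy (modMatrix Q β xt) (bvec y)) := by
    intro y
    rw [quboEnergy_modMatrix, ← Real.exp_add]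
    ring_nf
  have hfirst := div_sum_eq_div_sum_of_forall_eq_mul hc hpost x
  exact ⟨hfirst, hfirst.trans (div_sum_eq_div_sum_of_forall_eq_mul (Real.exp_pos _).ne' hmod x)⟩

/-- The posterior distribution `P^{post}(x|x̃) ∝ P_σ(x̃|x) P_Q(x)` equals the
Boltzmann form `exp(-β_σ Σᵢ(x̃ᵢ-xᵢ)² - f_Q(x))` normalized, and this is exactly the
Boltzmann distribution of the modified matrix `Q̃^{β_σ,x̃}`. -/
theorem stmt_3 (n : ℕ) (hn : 0 < n) (Q : Matrix (Fin n) (Fin n) ℝ) (hQ : Q.IsSymm)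
    (σ : ℝ) (hσ : σ ∈ Set.Ioo (0 : ℝ) 1)
    (β : ℝ) (hβ : β = Real.log ((1 - σ) / σ))
    (xt x : Fin n → Bool) :
    (noiseProb σ xt x * boltzmann Q x /
        ∑ x' : Fin n → Bool, noiseProb σ xt x' * boltzmann Q x'
      = Real.exp (-β * (∑ i, (bvec xt i - bvec x i) ^ 2) - quboEnergy Q (bvec x)) /
        ∑ x' : Fin n → Bool,
          Real.exp (-β * (∑ i, (bvec xt i - bvec x' i) ^ 2) - quboEnergy Q (bvec x'))) ∧
    (noiseProb σ xt x * boltzmann Q x /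
        ∑ x' : Fin n → Bool, noiseProb σ xt x' * boltzmann Q x'
      = boltzmann (modMatrix Q β xt) x) :=
  stmt_3_general n Q σ hσ β hβ xt x

end
end

section
/- Let n be a positive integer, Q ∈ ℝ^{n×n} symmetric, σ ∈ (0,1), β_σ := log((1−σ)/σ), and x̃ ∈ {0,1}^n. Then x ∈ {0,1}^n minimizes the penalized objective f_{Q,x̃,β_σ}(x) = f_Q(x) + β_σ·Σ_i (x_i − x̃_i)² over {0,1}^n if and only if x maximizes the posterior x ↦ P_σ(x̃ | x) P_Q(x) over {0,1}^n, i.e., setting ρ := log((1−σ)/σ) makes the denoised image the maximum a posteriori estimator of the noise-free image. -/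
/-!
A coordinate of the salt-and-pepper channel has weight `1 - σ` if the bit is kept and
`σ = (1 - σ) · exp (-β_σ)` if it is flipped, so `P_σ(x̃ | x) = (1 - σ)^n · exp (-β_σ · ‖x - x̃‖²)`
and the posterior is `(1 - σ)^n / Z · exp (-f_{Q,x̃,β_σ}(x))`. A positive multiple of
`exp (-f)` is maximal exactly where `f` is minimal.
-/

noncomputable section

/-- The penalized denoising objective `f_{Q,x̃,ρ}`. -/
def penalizedEnergy {n : ℕ} (Q : Matrix (Fin n) (Fin n) ℝ) (xt : Fin n → Bool) (ρ : ℝ)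
    (y : Fin n → Bool) : ℝ :=
  quboEnergy Q (bvec y) + ρ * ∑ i, (bvec y i - bvec xt i) ^ 2

def partitionFunction {n : ℕ} (Q : Matrix (Fin n) (Fin n) ℝ) : ℝ :=
  ∑ y : Fin n → Bool, Real.exp (-quboEnergy Q (bvec y))

open Real Finset

lemma sq_bvec_sub_eq_zero_or_one {n : ℕ} (a b : Fin n → Bool) (i : Fin n) :
    (bvec a i - bvec b i) ^ 2 = 0 ∨ (bvec a i - bvec b i) ^ 2 = 1 := by
  unfold bvec
  cases a i <;> cases b i <;> norm_num

lemma saltPepper_factor_eq {σ t : ℝ} (hσ0 : 0 < σ) (hσ1 : σ < 1) (ht : t = 0 ∨ t = 1) :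
    σ * t + (1 - σ) * (1 - t) = (1 - σ) * exp (-(log ((1 - σ) / σ) * t)) := by
  have h1σ : 0 < 1 - σ := sub_pos.2 hσ1
  rcases ht with rfl | rfl
  · simp
  · rw [mul_one, mul_one, sub_self, mul_zero, add_zero, exp_neg, exp_log (div_pos h1σ hσ0)]
    field_simp

lemma noiseProb_eq_mul_exp {n : ℕ} {σ : ℝ} (hσ0 : 0 < σ) (hσ1 : σ < 1) (xt y : Fin n → Bool) :
    noiseProb σ xt y =
      (1 - σ) ^ n * exp (-(log ((1 - σ) / σ) * ∑ i, (bvec y i - bvec xt i) ^ 2)) := by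
  rw [noiseProb, mul_sum, ← sum_neg_distrib, exp_sum, ← Fin.prod_const n,
    ← prod_mul_distrib]
  refine prod_congr rfl fun i _ => ?_
  rw [sub_sq_comm (bvec y i)]
  exact saltPepper_factor_eq hσ0 hσ1 (sq_bvec_sub_eq_zero_or_one xt y i)

lemma partitionFunction_pos {n : ℕ} (Q : Matrix (Fin n) (Fin n) ℝ) : 0 < partitionFunction Q :=
  sum_pos (fun _ _ => exp_pos _) univ_nonempty

lemma noiseProb_mul_boltzmann_eq {n : ℕ} {σ : ℝ} (hσ0 : 0 < σ) (hσ1 : σ < 1)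
    (Q : Matrix (Fin n) (Fin n) ℝ) (xt y : Fin n → Bool) :
    noiseProb σ xt y * boltzmann Q y =
      (1 - σ) ^ n / partitionFunction Q *
        exp (-penalizedEnergy Q xt (log ((1 - σ) / σ)) y) := by
  rw [noiseProb_eq_mul_exp hσ0 hσ1, boltzmann, ← partitionFunction, penalizedEnergy, neg_add,
    exp_add]
  ring

lemma forall_le_iff_forall_mul_exp_neg_le {α : Type*} (f : α → ℝ) {c : ℝ} (hc : 0 < c) (x : α) :
    (∀ y, f x ≤ f y) ↔ ∀ y, c * exp (-f y) ≤ c * exp (-f x) :=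
  forall_congr' fun y => by rw [mul_le_mul_iff_right₀ hc, exp_le_exp, neg_le_neg_iff]

theorem stmt_4_general (n : ℕ) (Q : Matrix (Fin n) (Fin n) ℝ)
    (σ : ℝ) (hσ : σ ∈ Set.Ioo (0 : ℝ) 1)
    (β : ℝ) (hβ : β = Real.log ((1 - σ) / σ))
    (xt x : Fin n → Bool) :
    (∀ y : Fin n → Bool,
        quboEnergy Q (bvec x) + β * ∑ i, (bvec x i - bvec xt i) ^ 2
          ≤ quboEnergy Q (bvec y) + β * ∑ i, (bvec y i - bvec xt i) ^ 2)
    ↔ (∀ y : Fin n → Bool,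
        noiseProb σ xt y * boltzmann Q y ≤ noiseProb σ xt x * boltzmann Q x) := by
  obtain ⟨hσ0, hσ1⟩ := hσ
  subst hβ
  have hc : 0 < (1 - σ) ^ n / partitionFunction Q :=
    div_pos (pow_pos (sub_pos.2 hσ1) n) (partitionFunction_pos Q)
  simp only [noiseProb_mul_boltzmann_eq hσ0 hσ1]
  exact forall_le_iff_forall_mul_exp_neg_le (penalizedEnergy Q xt _) hc x

/-- With `ρ = β_σ = log((1-σ)/σ)`, a binary vector `x` minimizes the
penalized objective `f_Q(x) + β_σ·Σᵢ (xᵢ - x̃ᵢ)²` over `{0,1}^n` if and only if it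
maximizes the posterior `x ↦ P_σ(x̃|x) P_Q(x)`, i.e. the denoised image is the MAP
estimator of the noise-free image. -/
theorem stmt_4 (n : ℕ) (hn : 0 < n) (Q : Matrix (Fin n) (Fin n) ℝ) (hQ : Q.IsSymm)
    (σ : ℝ) (hσ : σ ∈ Set.Ioo (0 : ℝ) 1)
    (β : ℝ) (hβ : β = Real.log ((1 - σ) / σ))
    (xt x : Fin n → Bool) :
    (∀ y : Fin n → Bool,
        quboEnergy Q (bvec x) + β * ∑ i, (bvec x i - bvec xt i) ^ 2
          ≤ quboEnergy Q (bvec y) + β * ∑ i, (bvec y i - bvec xt i) ^ 2)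
    ↔ (∀ y : Fin n → Bool,
        noiseProb σ xt y * boltzmann Q y ≤ noiseProb σ xt x * boltzmann Q x) :=
  stmt_4_general n Q σ hσ β hβ xt x

end
end

section
/- Let n be a positive integer, Q ∈ ℝ^{n×n} a diagonal matrix, σ ∈ (0, 1/2), and ρ ≥ log((1−σ)/σ). Suppose I_ρ := {i : |Q_{ii}| > ρ} is nonempty. Let X be distributed according to the Boltzmann distribution P_Q on {0,1}^n, let X̃ be X afflicted by salt-and-pepper noise of level σ (each coordinate flipped independently with probability σ), and let X* be the denoised image given by X*_i = 1 if Q_{ii} < −ρ, X*_i = 0 if Q_{ii} > ρ, and X*_i = X̃_i otherwise (this X* minimizes f_Q(x) + ρ·Σ_i (x_i − X̃_i)² over {0,1}^n). Then E[Σ_{i=1}^n 1(X*_i = X_i)] > E[Σ_{i=1}^n 1(X̃_i = X_i)]; i.e., the expected overlap of the denoised image with the true image is strictly larger than that of the noisy image. -/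
/-!
For diagonal `Q` the Boltzmann distribution is a product of independent bits with
`P(X_i = 0) = sigmoid (Q i i)`, so by linearity the expected overlap is a sum of per-pixel
agreement probabilities. The noisy image agrees at every pixel with probability
`1 - σ = sigmoid (log ((1 - σ) / σ)) ≤ sigmoid ρ`. Outside `I_ρ` the denoiser keeps the noisy
pixel; on `I_ρ` it outputs the more likely value of `X_i`, which is right with probability
`sigmoid |Q i i| > sigmoid ρ`.
-/

noncomputable section

/-- Probability of the i.i.d. Bernoulli(σ) noise pattern `ε`. -/
def noisePat {n : ℕ} (σ : ℝ) (ε : Fin n → Bool) : ℝ :=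
  ∏ i, if ε i then σ else 1 - σ

/-- The denoised image: `X*_i = 1` if `Q_{ii} < -ρ`, `X*_i = 0` if `Q_{ii} > ρ`, and
`X*_i = X̃_i` otherwise (this minimizes the penalized objective when `Q` is diagonal). -/
def denoised {n : ℕ} (Q : Matrix (Fin n) (Fin n) ℝ) (ρ : ℝ) (xt : Fin n → Bool) :
    Fin n → Bool :=
  fun i => if Q i i < -ρ then true else if ρ < Q i i then false else xt i

open Finset Real

section ProductWeights

variable {ι α R : Type*} [Fintype ι] [DecidableEq ι] [Fintype α] [CommSemiring R]

theorem sum_prod_eq_one (f : ι → α → R) (hf : ∀ i, ∑ a, f i a = 1) :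
    ∑ x : ι → α, ∏ i, f i (x i) = 1 := by
  rw [← Fintype.prod_sum, Finset.prod_eq_one fun i _ => hf i]

theorem sum_prod_mul_ite_eq [DecidableEq α] (f : ι → α → R) (hf : ∀ i, ∑ a, f i a = 1)
    (i₀ : ι) (a₀ : α) :
    ∑ x : ι → α, (∏ i, f i (x i)) * (if x i₀ = a₀ then 1 else 0) = f i₀ a₀ := by
  -- absorb the indicator into the `i₀`-th factor, so that the product structure survives
  set g : ι → α → R := fun i a => f i a * if i = i₀ then (if a = a₀ then 1 else 0) else 1
  have hg : ∀ x : ι → α,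
      (∏ i, f i (x i)) * (if x i₀ = a₀ then 1 else 0) = ∏ i, g i (x i) := by
    intro x
    rw [prod_mul_distrib, prod_ite_eq' univ i₀ fun i => if x i = a₀ then (1 : R) else 0]
    simp
  have hsum : ∀ i, ∑ a, g i a = if i = i₀ then f i₀ a₀ else 1 := by
    intro i
    split_ifs with hi
    · subst hi; simp [g]
    · simp [g, hi, hf i]
  simp_rw [hg, ← Fintype.prod_sum, hsum, prod_ite_eq' univ i₀ fun _ => f i₀ a₀]
  simp

end ProductWeights

section IndependentWeights

variable {α β R : Type*} [Fintype α] [Fintype β] [CommSemiring R]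

theorem sum_sum_mul_mul_of_sum_right_eq_one (p : α → R) (q : β → R) (hq : ∑ b, q b = 1)
    (F : α → R) : ∑ a, ∑ b, p a * q b * F a = ∑ a, p a * F a := by
  refine sum_congr rfl fun a _ => ?_
  rw [← sum_mul, ← mul_sum, hq, mul_one]

theorem sum_sum_mul_mul_of_sum_left_eq_one (p : α → R) (q : β → R) (hp : ∑ a, p a = 1)
    (G : β → R) : ∑ a, ∑ b, p a * q b * G b = ∑ b, q b * G b := by
  rw [sum_comm]
  refine sum_congr rfl fun b _ => ?_
  simp_rw [mul_assoc, ← sum_mul, hp, one_mul]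

theorem sum_sum_mul_sum_comm {ι : Type*} [Fintype ι] (w : α → β → R)
    (F : α → β → ι → R) :
    ∑ a, ∑ b, w a b * ∑ i, F a b i = ∑ i, ∑ a, ∑ b, w a b * F a b i := by
  simp only [mul_sum]
  exact (sum_congr rfl fun _ _ => Finset.sum_comm).trans Finset.sum_comm

end IndependentWeights

section DiagonalQUBO

variable {n : ℕ} {Q : Matrix (Fin n) (Fin n) ℝ}

theorem quboEnergy_of_isDiag (hQ : Q.IsDiag) (x : Fin n → ℝ) :
    quboEnergy Q x = ∑ i, Q i i * x i * x i :=
  sum_congr rfl fun i _ =>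
    sum_eq_single i (fun j _ hj => by rw [hQ hj.symm, zero_mul, zero_mul]) (by simp)

theorem exp_neg_quboEnergy_bvec_of_isDiag (hQ : Q.IsDiag) (x : Fin n → Bool) :
    exp (-quboEnergy Q (bvec x)) = ∏ i, if x i then exp (-Q i i) else 1 := by
  rw [quboEnergy_of_isDiag hQ, ← sum_neg_distrib, exp_sum]
  refine prod_congr rfl fun i _ => ?_
  by_cases h : x i <;> simp [bvec, h]

def bitGibbs (q : ℝ) (b : Bool) : ℝ := sigmoid (if b then -q else q)

theorem bitGibbs_eq_ite_mul_sigmoid (q : ℝ) (b : Bool) :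
    bitGibbs q b = (if b then exp (-q) else 1) * sigmoid q := by
  cases b <;> simp [bitGibbs, ← sigmoid_mul_rexp_neg, mul_comm]

theorem bitGibbs_false (q : ℝ) : bitGibbs q false = sigmoid q := rfl

theorem bitGibbs_true (q : ℝ) : bitGibbs q true = sigmoid (-q) := rfl

theorem sum_bitGibbs (q : ℝ) : ∑ b, bitGibbs q b = 1 := by
  simp [bitGibbs, sigmoid_neg]

theorem boltzmann_of_isDiag (hQ : Q.IsDiag) (x : Fin n → Bool) :
    boltzmann Q x = ∏ i, bitGibbs (Q i i) (x i) := by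
  have hZ : ∑ y : Fin n → Bool, exp (-quboEnergy Q (bvec y)) = ∏ i, (1 + exp (-Q i i)) := by
    simp_rw [exp_neg_quboEnergy_bvec_of_isDiag hQ]
    rw [← Fintype.prod_sum (fun i (b : Bool) => if b then exp (-Q i i) else 1)]
    simp [add_comm]
  simp_rw [boltzmann, hZ, exp_neg_quboEnergy_bvec_of_isDiag hQ, bitGibbs_eq_ite_mul_sigmoid,
    prod_mul_distrib, sigmoid_def, prod_inv_distrib, div_eq_mul_inv]

theorem sum_boltzmann (Q : Matrix (Fin n) (Fin n) ℝ) : ∑ x, boltzmann Q x = 1 := by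
  simp_rw [boltzmann, ← sum_div]
  exact div_self (sum_pos (fun _ _ => exp_pos _) univ_nonempty).ne'

theorem boltzmann_marginal_of_isDiag (hQ : Q.IsDiag) (i : Fin n) (b : Bool) :
    ∑ x, boltzmann Q x * (if x i = b then 1 else 0) = bitGibbs (Q i i) b := by
  simp_rw [boltzmann_of_isDiag hQ]
  exact sum_prod_mul_ite_eq (fun j => bitGibbs (Q j j)) (fun j => sum_bitGibbs _) i b

end DiagonalQUBO

section Noise

variable {n : ℕ}

theorem sum_noisePat (σ : ℝ) : ∑ ε : Fin n → Bool, noisePat σ ε = 1 :=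
  sum_prod_eq_one (fun _ (b : Bool) => if b then σ else 1 - σ) fun _ => by simp

theorem noisePat_marginal_false (σ : ℝ) (i : Fin n) :
    ∑ ε, noisePat σ ε * (if ε i = false then 1 else 0) = 1 - σ :=
  sum_prod_mul_ite_eq (fun _ (b : Bool) => if b then σ else 1 - σ) (fun _ => by simp) i false

end Noise

theorem sigmoid_log_one_sub_div {σ : ℝ} (hσ0 : 0 < σ) (hσ1 : σ < 1) :
    sigmoid (log ((1 - σ) / σ)) = 1 - σ := by
  have : 1 - σ ≠ 0 := by linarith
  rw [sigmoid_def, exp_neg, exp_log (div_pos (by linarith) hσ0), inv_div]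
  field_simp
  ring

section Denoising

variable {n : ℕ} {Q : Matrix (Fin n) (Fin n) ℝ} {σ ρ : ℝ} {i : Fin n}

/-- Probability that the reconstruction `y(X̃)` agrees with `X` at pixel `i`. -/
def expectedAgreement (Q : Matrix (Fin n) (Fin n) ℝ) (σ : ℝ)
    (y : (Fin n → Bool) → Fin n → Bool) (i : Fin n) : ℝ :=
  ∑ x : Fin n → Bool, ∑ ε : Fin n → Bool,
    boltzmann Q x * noisePat σ ε * if y (fun j => xor (x j) (ε j)) i = x i then 1 else 0

theorem sum_expectedAgreement (Q : Matrix (Fin n) (Fin n) ℝ) (σ : ℝ)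
    (y : (Fin n → Bool) → Fin n → Bool) :
    ∑ i, expectedAgreement Q σ y i =
      ∑ x : Fin n → Bool, ∑ ε : Fin n → Bool, boltzmann Q x * noisePat σ ε *
        ∑ i, (if y (fun j => xor (x j) (ε j)) i = x i then (1 : ℝ) else 0) :=
  (sum_sum_mul_sum_comm _ _).symm

theorem expectedAgreement_id (Q : Matrix (Fin n) (Fin n) ℝ) (σ : ℝ) (i : Fin n) :
    expectedAgreement Q σ id i = 1 - σ := by
  have hflip : ∀ x ε : Fin n → Bool,
      (if xor (x i) (ε i) = x i then (1 : ℝ) else 0) = if ε i = false then 1 else 0 := by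
    intro x ε
    cases x i <;> cases ε i <;> rfl
  simp only [expectedAgreement, id, hflip]
  rw [sum_sum_mul_mul_of_sum_left_eq_one _ _ (sum_boltzmann Q), noisePat_marginal_false]

theorem expectedAgreement_of_forall_eq (hQ : Q.IsDiag) {y : (Fin n → Bool) → Fin n → Bool}
    {b : Bool} (hy : ∀ xt, y xt i = b) : expectedAgreement Q σ y i = bitGibbs (Q i i) b := by
  simp only [expectedAgreement, hy, eq_comm (a := b)]
  rw [sum_sum_mul_mul_of_sum_right_eq_one _ _ (sum_noisePat σ), boltzmann_marginal_of_isDiag hQ]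

theorem denoised_apply_of_abs_le (h : |Q i i| ≤ ρ) (xt : Fin n → Bool) :
    denoised Q ρ xt i = xt i := by
  have h₁ : ¬Q i i < -ρ := by linarith [neg_abs_le (Q i i)]
  have h₂ : ¬ρ < Q i i := by linarith [le_abs_self (Q i i)]
  simp [denoised, h₁, h₂]

theorem expectedAgreement_denoised_of_abs_le (h : |Q i i| ≤ ρ) :
    expectedAgreement Q σ (denoised Q ρ) i = expectedAgreement Q σ id i := by
  simp only [expectedAgreement, denoised_apply_of_abs_le h, id]

theorem sigmoid_lt_expectedAgreement_denoised (hQ : Q.IsDiag) (h : ρ < |Q i i|) :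
    sigmoid ρ < expectedAgreement Q σ (denoised Q ρ) i := by
  by_cases hneg : Q i i < -ρ
  · rw [expectedAgreement_of_forall_eq hQ fun xt => if_pos hneg, bitGibbs_true]
    exact sigmoid_lt (by linarith)
  · have hpos : ρ < Q i i := (lt_abs.mp h).resolve_right (by linarith)
    rw [expectedAgreement_of_forall_eq hQ (b := false) fun xt => by simp [denoised, hneg, hpos],
      bitGibbs_false]
    exact sigmoid_lt hpos

theorem expectedAgreement_id_lt_denoised (hQ : Q.IsDiag) (hσ0 : 0 < σ) (hσ1 : σ < 1)
    (hρ : log ((1 - σ) / σ) ≤ ρ) (h : ρ < |Q i i|) :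
    expectedAgreement Q σ id i < expectedAgreement Q σ (denoised Q ρ) i :=
  calc expectedAgreement Q σ id i = sigmoid (log ((1 - σ) / σ)) := by
        rw [expectedAgreement_id, sigmoid_log_one_sub_div hσ0 hσ1]
    _ ≤ sigmoid ρ := sigmoid_le hρ
    _ < _ := sigmoid_lt_expectedAgreement_denoised hQ h

end Denoising

theorem stmt_6_general (n : ℕ) (Q : Matrix (Fin n) (Fin n) ℝ) (hQ : Q.IsDiag)
    (σ : ℝ) (hσ : σ ∈ Set.Ioo (0 : ℝ) (1 / 2))
    (ρ : ℝ) (hρ : Real.log ((1 - σ) / σ) ≤ ρ)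
    (hI : ∃ i, ρ < |Q i i|) :
    (∑ x : Fin n → Bool, ∑ ε : Fin n → Bool,
        boltzmann Q x * noisePat σ ε *
          ∑ i, (if denoised Q ρ (fun j => xor (x j) (ε j)) i = x i then (1 : ℝ) else 0))
    > (∑ x : Fin n → Bool, ∑ ε : Fin n → Bool,
        boltzmann Q x * noisePat σ ε *
          ∑ i, (if xor (x i) (ε i) = x i then (1 : ℝ) else 0)) := by
  obtain ⟨hσ0, hσ2⟩ := hσ
  have hσ1 : σ < 1 := by linarith
  obtain ⟨i₀, hi₀⟩ := hI
  -- `fun xt => xt` rather than `id`, so that the instantiated rule beta-reduces to the noisy sum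
  rw [← sum_expectedAgreement, gt_iff_lt, ← sum_expectedAgreement Q σ fun xt => xt]
  refine sum_lt_sum (fun i _ => ?_)
    ⟨i₀, mem_univ _, expectedAgreement_id_lt_denoised hQ hσ0 hσ1 hρ hi₀⟩
  rcases le_or_gt |Q i i| ρ with h | h
  · exact (expectedAgreement_denoised_of_abs_le h).ge
  · exact (expectedAgreement_id_lt_denoised hQ hσ0 hσ1 hρ h).le

/-- With `Q` diagonal, `σ ∈ (0,1/2)`, `ρ ≥ log((1-σ)/σ)`, and
`I_ρ = {i : |Q_{ii}| > ρ}` nonempty, the expected number of pixels on which the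
denoised image `X*` agrees with the true image `X ~ P_Q` is strictly larger than the
expected number on which the noisy image `X̃` agrees with `X`. The expectation is the
explicit sum over the image `x` and the independent Bernoulli(σ) noise pattern `ε`,
with `X̃ᵢ = xᵢ XOR εᵢ`. -/
theorem stmt_6 (n : ℕ) (hn : 0 < n) (Q : Matrix (Fin n) (Fin n) ℝ) (hQ : Q.IsDiag)
    (σ : ℝ) (hσ : σ ∈ Set.Ioo (0 : ℝ) (1 / 2))
    (ρ : ℝ) (hρ : Real.log ((1 - σ) / σ) ≤ ρ)
    (hI : ∃ i, ρ < |Q i i|) :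
    (∑ x : Fin n → Bool, ∑ ε : Fin n → Bool,
        boltzmann Q x * noisePat σ ε *
          ∑ i, (if denoised Q ρ (fun j => xor (x j) (ε j)) i = x i then (1 : ℝ) else 0))
    > (∑ x : Fin n → Bool, ∑ ε : Fin n → Bool,
        boltzmann Q x * noisePat σ ε *
          ∑ i, (if xor (x i) (ε i) = x i then (1 : ℝ) else 0)) :=
  stmt_6_general n Q hQ σ hσ ρ hρ hI

end
end
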